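/- For n ≥ 2 and K of characteristic 2, the Sₙ-invariants of (⊕_{i<j} V_i ⊗ V_j) ⊕ (⊕_i Λ²V) with V_i = V (Sₙ permuting indices, with sign −1 on reversed pairs in the first summand) contain a subspace of dimension strictly greater than dim Λ²V whenever dim V ≥ 1. -/
import Mathlib


open TensorProduct Module

/-- The signed action of a permutation `σ ∈ Sₙ` on families indexed by pairs `(i,j)`, `i < j`,
with values in `V ⊗ V`: indices are permuted, and when a pair gets reversed the two tensor
factors are flipped and a sign `-1` is introduced. -/
noncomputable def signedAct (K V : Type*) [Field K] [AddCommGroup V] [Module K V]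
    {n : ℕ} (σ : Equiv.Perm (Fin n))
    (x : {p : Fin n × Fin n // p.1 < p.2} → V ⊗[K] V) :
    {p : Fin n × Fin n // p.1 < p.2} → V ⊗[K] V := fun p =>
  if h : σ⁻¹ p.1.1 < σ⁻¹ p.1.2 then x ⟨(σ⁻¹ p.1.1, σ⁻¹ p.1.2), h⟩
  else - (TensorProduct.comm K V V) (x ⟨(σ⁻¹ p.1.2, σ⁻¹ p.1.1), by
    rcases lt_or_gt_of_ne (fun he => (ne_of_lt p.2) (σ⁻¹.injective he)) with h' | h'
    · exact absurd h' h
    · exact h'⟩)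

/-- For `n ≥ 2` and `char K = 2`, the `Sₙ`-invariants of
`(⊕_{i<j} V ⊗ V) ⊕ (⊕_i Λ²V)` (permutation of indices, with the sign `-1` on reversed pairs
in the first summand) contain a subspace of dimension strictly greater than `dim Λ²V`,
whenever `dim V ≥ 1`. -/
theorem stmt19 (K V : Type*) [Field K] [CharP K 2] [AddCommGroup V] [Module K V]
    [FiniteDimensional K V] {n : ℕ} (hn : 2 ≤ n) (hd : 1 ≤ finrank K V) :
    ∃ S : Submodule K (({p : Fin n × Fin n // p.1 < p.2} → V ⊗[K] V) × (Fin n → ⋀[K]^2 V)),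
      (∀ w ∈ S, ∀ σ : Equiv.Perm (Fin n),
        (signedAct K V σ w.1, fun i => w.2 (σ⁻¹ i)) = w) ∧
      finrank K (⋀[K]^2 V) < finrank K S := by
  -- `Λ²V` is finite dimensional
  haveI : FiniteDimensional K (⋀[K]^2 V) := by
    have hfg : (LinearMap.range (ExteriorAlgebra.ι K : V →ₗ[K] ExteriorAlgebra K V)).FG := by
      rw [← Submodule.map_top]
      exact (Module.finite_def.mp ‹FiniteDimensional K V›).map _
    exact Module.Finite.iff_fg.mpr (hfg.pow 2)
  -- in char 2, negation is the identity
  have hneg : ∀ u : V ⊗[K] V, -u = u := by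
    intro u
    have h2 : (2 : K) = 0 := by exact_mod_cast CharP.cast_eq_zero K 2
    have : u + u = 0 := by rw [← two_smul K u, h2, zero_smul]
    exact neg_eq_of_add_eq_zero_left this
  -- a nonzero vector
  obtain ⟨α, hα⟩ : ∃ α : V, α ≠ 0 := by
    haveI : Nontrivial V := Module.nontrivial_of_finrank_pos (R := K) (by omega)
    exact exists_ne 0
  -- the tensor `α ⊗ α` is nonzero
  have ht : (α ⊗ₜ[K] α : V ⊗[K] V) ≠ 0 := by
    obtain ⟨φ, hφ⟩ : ∃ φ : Module.Dual K V, φ α ≠ 0 := by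
      by_contra h
      push_neg at h
      exact hα ((Module.forall_dual_apply_eq_zero_iff K α).mp h)
    intro h0
    apply hφ
    have := congrArg (fun u => (TensorProduct.lid K K) (TensorProduct.map φ φ u)) h0
    simp only [TensorProduct.map_tmul, TensorProduct.lid_tmul, map_zero, smul_eq_mul] at this
    exact (mul_self_eq_zero).mp this
  set t : V ⊗[K] V := α ⊗ₜ[K] α with htdef
  -- the two injections
  let Φ₁ : K →ₗ[K] ({p : Fin n × Fin n // p.1 < p.2} → V ⊗[K] V) :=
    LinearMap.pi fun _ => LinearMap.toSpanSingleton K _ t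
  let Φ₂ : (⋀[K]^2 V) →ₗ[K] (Fin n → ⋀[K]^2 V) :=
    LinearMap.pi fun _ => LinearMap.id
  refine ⟨LinearMap.range (Φ₁.prodMap Φ₂), ?_, ?_⟩
  · rintro w ⟨⟨c, y⟩, rfl⟩ σ
    refine Prod.ext ?_ rfl
    funext p
    show signedAct K V σ (fun _ => c • t) p = c • t
    unfold signedAct
    split
    · rfl
    · show -(TensorProduct.comm K V V) (c • t) = c • t
      rw [map_smul, htdef, TensorProduct.comm_tmul, ← smul_neg, hneg]
  · have hinj : Function.Injective (Φ₁.prodMap Φ₂) := by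
      have h01 : ((⟨0, by omega⟩ : Fin n) : Fin n) < (⟨1, by omega⟩ : Fin n) := by
        simp [Fin.lt_def]
      intro a b hab
      obtain ⟨c₁, y₁⟩ := a
      obtain ⟨c₂, y₂⟩ := b
      have h1 := congrFun (congrArg Prod.fst hab) ⟨(⟨0, by omega⟩, ⟨1, by omega⟩), h01⟩
      have h2 := congrFun (congrArg Prod.snd hab) ⟨0, by omega⟩
      simp only [LinearMap.prodMap_apply, Φ₁, Φ₂, LinearMap.pi_apply,
        LinearMap.toSpanSingleton_apply, LinearMap.id_apply] at h1 h2
      have hc : c₁ = c₂ := by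
        by_contra hne
        have : (c₁ - c₂) • t = 0 := by rw [sub_smul, h1, sub_self]
        rcases smul_eq_zero.mp this with h | h
        · exact hne (sub_eq_zero.mp h)
        · exact ht h
      exact Prod.ext hc h2
    rw [LinearMap.finrank_range_of_inj hinj, Module.finrank_prod, Module.finrank_self]
    omega
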